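/- arXiv:math/0605041 — 2 statements merged into one kernel-verified Lean document; each statement's English description precedes it below -/
import Mathlib

section
/- Equation (15): Let g be a framed Lie algebra over k. For all z ∈ g and Q ∈ J(g), η(z ⊗ Q + ∇_z Q) = ∇_z ∘ η(Q) − η(Q) ∘ ∇_z as k-linear endomorphisms of T(g). -/
/-!
For a derivation `∇` one has `[∇, L_a] = L_{∇ a}`, so the `t`-parts of both sides agree by
`t(z ⊗ Q + ∇_z Q) = z ⋄ t(Q)`. The commutator of two derivations is a derivation, and derivations
of `T(g)` are determined on `g`, where the `r`-parts agree by the defining recursion of `r`.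
-/

set_option linter.unusedSectionVars false

noncomputable section
open TensorAlgebra TensorProduct

variable (k : Type) [Field k] [CharZero k] (g : Type) [LieRing g] [LieAlgebra k g]

/-- `Λ(g)`: the span of the commutators `x ⊗ y - y ⊗ x` of generators. -/
def Lam : Submodule k (TensorAlgebra k g) :=
  Submodule.span k {w | ∃ x y : g, w = ι k x * ι k y - ι k y * ι k x}

/-- `J(g) = T(g)·Λ(g)`, the left ideal generated by `Λ(g)`, as a `k`-submodule. -/
def Jg : Submodule k (TensorAlgebra k g) :=
  Submodule.span k {w | ∃ (a : TensorAlgebra k g) (x y : g),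
    w = a * (ι k x * ι k y - ι k y * ι k x)}

lemma mul_mem_Jg {ω : TensorAlgebra k g} (hω : ω ∈ Lam k g) (b : TensorAlgebra k g) :
    b * ω ∈ Jg k g := by
  induction hω using Submodule.span_induction with
  | mem w hw =>
      obtain ⟨x, y, rfl⟩ := hw
      exact Submodule.subset_span ⟨b, x, y, rfl⟩
  | zero => simp
  | add u v hu hv hbu hbv => simpa [mul_add] using (Jg k g).add_mem hbu hbv
  | smul a u hu hbu => simpa [mul_smul_comm] using (Jg k g).smul_mem a hbu

/-- Right multiplication by `ω ∈ Λ(g)`, corestricted to `J(g)`. -/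
def mulJ {ω : TensorAlgebra k g} (hω : ω ∈ Lam k g) :
    TensorAlgebra k g →ₗ[k] Jg k g :=
  LinearMap.codRestrict _ (LinearMap.mulRight k ω) (mul_mem_Jg k g hω)

section Leibniz

variable {R A : Type*} [CommRing R]

def IsLeibniz [Ring A] [Algebra R A] (D : Module.End R A) : Prop :=
  ∀ a b, D (a * b) = D a * b + a * D b

namespace IsLeibniz

variable [Ring A] [Algebra R A] {D E : Module.End R A}

lemma map_one (hD : IsLeibniz D) : D 1 = 0 := by
  simpa using hD 1 1

lemma commutator (hD : IsLeibniz D) (hE : IsLeibniz E) : IsLeibniz (D ∘ₗ E - E ∘ₗ D) := by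
  rw [IsLeibniz] at hD hE ⊢
  intro a b
  simp only [LinearMap.sub_apply, LinearMap.comp_apply, hD, hE, map_add, sub_mul, mul_sub]
  abel

lemma comp_mulLeft_sub_mulLeft_comp (hD : IsLeibniz D) (a : A) :
    D ∘ₗ LinearMap.mulLeft R a - LinearMap.mulLeft R a ∘ₗ D = LinearMap.mulLeft R (D a) := by
  ext b
  simp [hD a b]

end IsLeibniz

lemma IsLeibniz.ext_tensorAlgebra {M : Type*} [AddCommGroup M] [Module R M]
    {D E : Module.End R (TensorAlgebra R M)} (hD : IsLeibniz D) (hE : IsLeibniz E)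
    (h : ∀ x : M, D (ι R x) = E (ι R x)) : D = E := by
  ext a
  induction a using TensorAlgebra.induction with
  | algebraMap c => rw [Algebra.algebraMap_eq_smul_one, map_smul, map_smul, hD.map_one, hE.map_one]
  | ι x => exact h x
  | mul a b ha hb => rw [hD, hE, ha, hb]
  | add a b ha hb => rw [map_add, map_add, ha, hb]

end Leibniz

theorem equation_fifteen
    (d : g →ₗ[k] g →ₗ[k] g)
    (N : g → Module.End k (TensorAlgebra k g))
    (hNd : ∀ (x : g) (a b : TensorAlgebra k g), N x (a * b) = N x a * b + a * N x b)
    (hN : ∀ x y : g, N x (ι k y) = ι k (d x y))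
    (t : Jg k g →ₗ[k] g)
    (ht2 : ∀ (x : g) (u : Jg k g) (h : ι k x * (u : TensorAlgebra k g) + N x u ∈ Jg k g),
      t ⟨_, h⟩ = d x (t u))
    (r : Jg k g →ₗ[k] Module.End k g)
    (hr2 : ∀ (x : g) (u : Jg k g) (h : ι k x * (u : TensorAlgebra k g) + N x u ∈ Jg k g),
      r ⟨_, h⟩ = d x ∘ₗ r u - r u ∘ₗ d x)
    (rD : Jg k g →ₗ[k] Module.End k (TensorAlgebra k g))
    (hrD1 : ∀ (u : Jg k g) (z : g), rD u (ι k z) = ι k (r u z))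
    (hrD2 : ∀ (u : Jg k g) (a b : TensorAlgebra k g),
      rD u (a * b) = rD u a * b + a * rD u b)
    (z : g) (Q : Jg k g) (h : ι k z * (Q : TensorAlgebra k g) + N z Q ∈ Jg k g) :
    LinearMap.mulLeft k (ι k (t ⟨ι k z * (Q : TensorAlgebra k g) + N z Q, h⟩))
        + rD ⟨ι k z * (Q : TensorAlgebra k g) + N z Q, h⟩
      = N z ∘ₗ (LinearMap.mulLeft k (ι k (t Q)) + rD Q)
        - (LinearMap.mulLeft k (ι k (t Q)) + rD Q) ∘ₗ N z := by
  set P : Jg k g := ⟨ι k z * (Q : TensorAlgebra k g) + N z Q, h⟩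
  have hNz : IsLeibniz (N z) := hNd z
  have htP : t P = d z (t Q) := ht2 z Q h
  have hrP : r P = d z ∘ₗ r Q - r Q ∘ₗ d z := hr2 z Q h
  have hrDP : rD P = N z ∘ₗ rD Q - rD Q ∘ₗ N z :=
    IsLeibniz.ext_tensorAlgebra (hrD2 P) (hNz.commutator (hrD2 Q)) fun x => by
      simp only [LinearMap.sub_apply, LinearMap.comp_apply, hrD1, hrP, hN, map_sub]
  have hLP : LinearMap.mulLeft k (ι k (t P))
      = N z ∘ₗ LinearMap.mulLeft k (ι k (t Q)) - LinearMap.mulLeft k (ι k (t Q)) ∘ₗ N z := by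
    rw [hNz.comp_mulLeft_sub_mulLeft_comp, hN, htP]
  rw [hLP, hrDP, LinearMap.comp_add, LinearMap.add_comp]
  abel
end
end

section
/- Simplest case of the main theorem: Let g be a framed Lie algebra over k. For all x, y, v ∈ g, the element x ⊗ y ⊗ v − y ⊗ x ⊗ v + (x ⋄ y − y ⋄ x − [x, y]) ⊗ v + (x ⋄ (y ⋄ v) − y ⋄ (x ⋄ v) − [x, y] ⋄ v) of T(g) lies in the kernel of p ∘ K. -/
/-!
With `N x = ∇ₓ` and `d x y = x ⋄ y`, the defining property of `K` rearranges to
`K (x ⊗ u) = x ⊗ K u - K (∇ₓ u)`, which computes `K` on tensors of degree at most three.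
Expanding `K` on the given element this way, every `⋄`-term cancels against the correction
terms `t(x,y) ⊗ v` and `r(x,y) v`, and what is left is `(x ⊗ y - y ⊗ x - [x, y]) ⊗ v`,
which lies in the ideal defining `U(g)`.
-/

set_option linter.unusedSectionVars false

noncomputable section
open TensorAlgebra TensorProduct

theorem map_one_eq_zero_of_leibniz {A : Type*} [Ring A] {D : A → A}
    (hD : ∀ a b, D (a * b) = D a * b + a * D b) : D 1 = 0 := by
  simpa using hD 1 1

theorem UniversalEnvelopingAlgebra.mkAlgHom_ι_lie_add (R : Type*) {L : Type*} [CommRing R]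
    [LieRing L] [LieAlgebra R L] (x y : L) :
    mkAlgHom R L (TensorAlgebra.ι R ⁅x, y⁆ + TensorAlgebra.ι R y * TensorAlgebra.ι R x) =
      mkAlgHom R L (TensorAlgebra.ι R x * TensorAlgebra.ι R y) :=
  Quotient.sound <| RingCon.le_ringConGen _ _ (Rel.lie_compat x y)

namespace FramedRecursion

variable {R M : Type*} [CommRing R] [AddCommGroup M] [Module R M]
  {d : M →ₗ[R] M →ₗ[R] M} {N : M → Module.End R (TensorAlgebra R M)}
  {K : TensorAlgebra R M →ₗ[R] TensorAlgebra R M}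

theorem K_ι_mul (hK : ∀ (x : M) (u : TensorAlgebra R M), K (ι R x * u + N x u) = ι R x * K u)
    (a : M) (u : TensorAlgebra R M) : K (ι R a * u) = ι R a * K u - K (N a u) :=
  eq_sub_of_add_eq (by rw [← map_add, hK])

theorem K_ι (hK : ∀ (x : M) (u : TensorAlgebra R M), K (ι R x * u + N x u) = ι R x * K u)
    (hK1 : K 1 = 1) (hN1 : ∀ x, N x 1 = 0) (a : M) : K (ι R a) = ι R a := by
  simpa [hK1, hN1] using K_ι_mul hK a 1

theorem K_ι_mul_ι
    (hK : ∀ (x : M) (u : TensorAlgebra R M), K (ι R x * u + N x u) = ι R x * K u)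
    (hK1 : K 1 = 1) (hN1 : ∀ x, N x 1 = 0) (hN : ∀ x y : M, N x (ι R y) = ι R (d x y))
    (a b : M) : K (ι R a * ι R b) = ι R a * ι R b - ι R (d a b) := by
  rw [K_ι_mul hK, K_ι hK hK1 hN1, hN, K_ι hK hK1 hN1]

theorem K_ι_mul_ι_mul_ι
    (hK : ∀ (x : M) (u : TensorAlgebra R M), K (ι R x * u + N x u) = ι R x * K u)
    (hK1 : K 1 = 1)
    (hNd : ∀ (x : M) (a b : TensorAlgebra R M), N x (a * b) = N x a * b + a * N x b)
    (hN : ∀ x y : M, N x (ι R y) = ι R (d x y)) (a b c : M) :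
    K (ι R a * ι R b * ι R c) =
      ι R a * (ι R b * ι R c - ι R (d b c))
        - (ι R (d a b) * ι R c - ι R (d (d a b) c) + (ι R b * ι R (d a c) - ι R (d b (d a c)))) := by
  have hN1 : ∀ x, N x 1 = 0 := fun x => map_one_eq_zero_of_leibniz (hNd x)
  rw [mul_assoc, K_ι_mul hK, hNd, hN, hN, map_add, K_ι_mul_ι hK hK1 hN1 hN,
    K_ι_mul_ι hK hK1 hN1 hN, K_ι_mul_ι hK hK1 hN1 hN]

section Lie

variable {R L : Type*} [CommRing R] [LieRing L] [LieAlgebra R L]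
  {d : L →ₗ[R] L →ₗ[R] L} {N : L → Module.End R (TensorAlgebra R L)}
  {K : TensorAlgebra R L →ₗ[R] TensorAlgebra R L}

theorem K_framed_commutator
    (hK : ∀ (x : L) (u : TensorAlgebra R L), K (ι R x * u + N x u) = ι R x * K u)
    (hK1 : K 1 = 1)
    (hNd : ∀ (x : L) (a b : TensorAlgebra R L), N x (a * b) = N x a * b + a * N x b)
    (hN : ∀ x y : L, N x (ι R y) = ι R (d x y)) (x y v : L) :
    K (ι R x * ι R y * ι R v - ι R y * ι R x * ι R v
        + ι R (d x y - d y x - ⁅x, y⁆) * ι R v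
        + ι R (d x (d y v) - d y (d x v) - d ⁅x, y⁆ v)) =
      ι R x * ι R y * ι R v - (ι R ⁅x, y⁆ + ι R y * ι R x) * ι R v := by
  have hN1 : ∀ x, N x 1 = 0 := fun x => map_one_eq_zero_of_leibniz (hNd x)
  simp only [map_sub, map_add, sub_mul, K_ι_mul_ι_mul_ι hK hK1 hNd hN,
    K_ι_mul_ι hK hK1 hN1 hN, K_ι hK hK1 hN1]
  noncomm_ring

end Lie

end FramedRecursion

variable (k : Type) [Field k] [CharZero k] (g : Type) [LieRing g] [LieAlgebra k g]

/-- **Simplest case of the main theorem.** For all `x, y, v ∈ g`, the element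
`x ⊗ y ⊗ v - y ⊗ x ⊗ v + t(x,y) ⊗ v + r(x,y)v` of `T(g)` lies in `ker (p ∘ K)`. -/
theorem simplest_case
    (d : g →ₗ[k] g →ₗ[k] g)
    (N : g → Module.End k (TensorAlgebra k g))
    (hNd : ∀ (x : g) (a b : TensorAlgebra k g), N x (a * b) = N x a * b + a * N x b)
    (hN : ∀ x y : g, N x (ι k y) = ι k (d x y))
    (K : TensorAlgebra k g →ₗ[k] TensorAlgebra k g)
    (hK1 : K 1 = 1)
    (hK : ∀ (x : g) (u : TensorAlgebra k g), K (ι k x * u + N x u) = ι k x * K u)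
    (x y v : g) :
    UniversalEnvelopingAlgebra.mkAlgHom k g
      (K (ι k x * ι k y * ι k v - ι k y * ι k x * ι k v
          + ι k (d x y - d y x - ⁅x, y⁆) * ι k v
          + ι k (d x (d y v) - d y (d x v) - d ⁅x, y⁆ v))) = 0 := by
  rw [FramedRecursion.K_framed_commutator hK hK1 hNd hN, ← sub_mul, map_mul, map_sub,
    UniversalEnvelopingAlgebra.mkAlgHom_ι_lie_add, sub_self, zero_mul]
end
end
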